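/- Let L > 0, R > 0, and v^R(s) = (cos(s/R), −sin(s/R), 0). Suppose φ : [0, L] × [0, ∞) → ℝ³ is smooth and satisfies the perturbation equation φ_t = φ × φₛₛ + φ × v^R_{ss} + v^R × φₛₛ on [0, L] × [0, ∞) with boundary conditions φ(0, t) = φ(L, t) = 0 for all t ≥ 0. Then the quantity E(φ(t)) := ∫₀ᴸ |φₛ(s, t)|² ds − (1/R²) ∫₀ᴸ |φ(s, t)|² ds is independent of t; that is, E(φ(t)) = E(φ(·, 0)) for all t ≥ 0. -/

import Mathlib

open Real MeasureTheory Set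

noncomputable section

/-- Euclidean dot product on ℝ³ (vectors as `Fin 3 → ℝ`). -/
def dot3 (a b : Fin 3 → ℝ) : ℝ := a 0 * b 0 + a 1 * b 1 + a 2 * b 2

/-- Euclidean norm on ℝ³. -/
def norm3 (a : Fin 3 → ℝ) : ℝ := Real.sqrt (dot3 a a)

/-- Cross product on ℝ³. -/
def cross3 (a b : Fin 3 → ℝ) : Fin 3 → ℝ :=
  ![a 1 * b 2 - a 2 * b 1, a 2 * b 0 - a 0 * b 2, a 0 * b 1 - a 1 * b 0]

/-- Partial derivative in the first (space) variable. -/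
def pS {E : Type*} [NormedAddCommGroup E] [NormedSpace ℝ E]
    (f : ℝ → ℝ → E) (s t : ℝ) : E := deriv (fun s' => f s' t) s

/-- Partial derivative in the second (time) variable. -/
def pT {E : Type*} [NormedAddCommGroup E] [NormedSpace ℝ E]
    (f : ℝ → ℝ → E) (s t : ℝ) : E := deriv (fun t' => f s t') t

/-- The Sobolev `H^m` norm on `(0, L)` of an ℝ³-valued function. -/
def sobNorm3 (m : ℕ) (L : ℝ) (f : ℝ → Fin 3 → ℝ) : ℝ :=
  Real.sqrt (∑ k ∈ Finset.range (m + 1), ∫ s in (0:ℝ)..L, norm3 (iteratedDeriv k f s) ^ 2)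

/-- The Sobolev `H^m` norm on `(0, L)` of a ℂ-valued function. -/
def sobNormC (m : ℕ) (L : ℝ) (f : ℝ → ℂ) : ℝ :=
  Real.sqrt (∑ k ∈ Finset.range (m + 1), ∫ s in (0:ℝ)..L, ‖iteratedDeriv k f s‖ ^ 2)

/-- Sup (`L^∞`) norm on `[0, L]`. -/
def supIcc (f : ℝ → ℝ) (L : ℝ) : ℝ := ⨆ s : Set.Icc (0:ℝ) L, |f (s : ℝ)|

section calc_lemmas
variable {E : Type*} [NormedAddCommGroup E] [NormedSpace ℝ E]

lemma hasDerivAt_slice_fst {f : ℝ → ℝ → E} (hf : ContDiff ℝ (⊤ : ℕ∞) (Function.uncurry f)) (s t : ℝ) :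
    HasDerivAt (fun s' => f s' t) (fderiv ℝ (Function.uncurry f) (s, t) (1, 0)) s := by
  have h1 : HasFDerivAt (Function.uncurry f) (fderiv ℝ (Function.uncurry f) (s, t)) (s, t) :=
    (hf.differentiable (by simp) (s, t)).hasFDerivAt
  have h2 : HasDerivAt (fun s' : ℝ => ((s' : ℝ), t)) ((1:ℝ), (0:ℝ)) s :=
    (hasDerivAt_id s).prodMk (hasDerivAt_const s t)
  exact h1.comp_hasDerivAt s h2

lemma hasDerivAt_slice_snd {f : ℝ → ℝ → E} (hf : ContDiff ℝ (⊤ : ℕ∞) (Function.uncurry f)) (s t : ℝ) :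
    HasDerivAt (fun t' => f s t') (fderiv ℝ (Function.uncurry f) (s, t) (0, 1)) t := by
  have h1 : HasFDerivAt (Function.uncurry f) (fderiv ℝ (Function.uncurry f) (s, t)) (s, t) :=
    (hf.differentiable (by simp) (s, t)).hasFDerivAt
  have h2 : HasDerivAt (fun t' : ℝ => ((s : ℝ), t')) ((0:ℝ), (1:ℝ)) t :=
    (hasDerivAt_const t s).prodMk (hasDerivAt_id t)
  exact h1.comp_hasDerivAt t h2

lemma hasDerivAt_pS {f : ℝ → ℝ → E} (hf : ContDiff ℝ (⊤ : ℕ∞) (Function.uncurry f)) (s t : ℝ) :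
    HasDerivAt (fun s' => f s' t) (pS f s t) s :=
  (hasDerivAt_slice_fst hf s t).differentiableAt.hasDerivAt

lemma hasDerivAt_pT {f : ℝ → ℝ → E} (hf : ContDiff ℝ (⊤ : ℕ∞) (Function.uncurry f)) (s t : ℝ) :
    HasDerivAt (fun t' => f s t') (pT f s t) t :=
  (hasDerivAt_slice_snd hf s t).differentiableAt.hasDerivAt

lemma pS_eq {f : ℝ → ℝ → E} (hf : ContDiff ℝ (⊤ : ℕ∞) (Function.uncurry f)) (s t : ℝ) :
    pS f s t = fderiv ℝ (Function.uncurry f) (s, t) (1, 0) :=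
  (hasDerivAt_slice_fst hf s t).deriv

lemma pT_eq {f : ℝ → ℝ → E} (hf : ContDiff ℝ (⊤ : ℕ∞) (Function.uncurry f)) (s t : ℝ) :
    pT f s t = fderiv ℝ (Function.uncurry f) (s, t) (0, 1) :=
  (hasDerivAt_slice_snd hf s t).deriv

lemma contDiff_pS {f : ℝ → ℝ → E} (hf : ContDiff ℝ (⊤ : ℕ∞) (Function.uncurry f)) :
    ContDiff ℝ (⊤ : ℕ∞) (Function.uncurry (pS f)) := by
  have : Function.uncurry (pS f)
      = fun p : ℝ × ℝ => fderiv ℝ (Function.uncurry f) p ((1:ℝ), (0:ℝ)) := by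
    funext p; exact pS_eq hf p.1 p.2
  rw [this]
  exact (hf.fderiv_right (by simp)).clm_apply contDiff_const

lemma contDiff_pT {f : ℝ → ℝ → E} (hf : ContDiff ℝ (⊤ : ℕ∞) (Function.uncurry f)) :
    ContDiff ℝ (⊤ : ℕ∞) (Function.uncurry (pT f)) := by
  have : Function.uncurry (pT f)
      = fun p : ℝ × ℝ => fderiv ℝ (Function.uncurry f) p ((0:ℝ), (1:ℝ)) := by
    funext p; exact pT_eq hf p.1 p.2
  rw [this]
  exact (hf.fderiv_right (by simp)).clm_apply contDiff_const

lemma pS_pT_symm {f : ℝ → ℝ → E} (hf : ContDiff ℝ (⊤ : ℕ∞) (Function.uncurry f)) (s t : ℝ) :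
    pS (pT f) s t = pT (pS f) s t := by
  set u := Function.uncurry f with hu
  have hD : ContDiff ℝ (⊤ : ℕ∞) (fderiv ℝ u) := hf.fderiv_right (by simp)
  have hD2 : HasFDerivAt (fderiv ℝ u) (fderiv ℝ (fderiv ℝ u) (s, t)) (s, t) :=
    (hD.differentiable (by simp) _).hasFDerivAt
  set D2 := fderiv ℝ (fderiv ℝ u) (s, t) with hD2def
  have hsym : D2 ((1:ℝ), (0:ℝ)) ((0:ℝ), (1:ℝ)) = D2 ((0:ℝ), (1:ℝ)) ((1:ℝ), (0:ℝ)) :=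
    second_derivative_symmetric (fun y => (hf.differentiable (by simp) y).hasFDerivAt) hD2 _ _
  have e1 : pS (pT f) s t = D2 (1, 0) (0, 1) := by
    have hc : HasDerivAt (fun s' => fderiv ℝ u (s', t)) (D2 (1, 0)) s :=
      hD2.comp_hasDerivAt s ((hasDerivAt_id s).prodMk (hasDerivAt_const s t))
    have hc2 : HasDerivAt (fun s' => fderiv ℝ u (s', t) ((0:ℝ), (1:ℝ))) (D2 (1, 0) (0, 1)) s :=
      (ContinuousLinearMap.apply ℝ E ((0:ℝ), (1:ℝ))).hasFDerivAt.comp_hasDerivAt s hc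
    have : (fun s' => pT f s' t) = fun s' => fderiv ℝ u (s', t) ((0:ℝ), (1:ℝ)) := by
      funext s'; exact pT_eq hf s' t
    rw [pS, this]
    exact hc2.deriv
  have e2 : pT (pS f) s t = D2 (0, 1) (1, 0) := by
    have hc : HasDerivAt (fun t' => fderiv ℝ u (s, t')) (D2 (0, 1)) t :=
      hD2.comp_hasDerivAt t ((hasDerivAt_const t s).prodMk (hasDerivAt_id t))
    have hc2 : HasDerivAt (fun t' => fderiv ℝ u (s, t') ((1:ℝ), (0:ℝ))) (D2 (0, 1) (1, 0)) t :=
      (ContinuousLinearMap.apply ℝ E ((1:ℝ), (0:ℝ))).hasFDerivAt.comp_hasDerivAt t hc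
    have : (fun t' => pS f s t') = fun t' => fderiv ℝ u (s, t') ((1:ℝ), (0:ℝ)) := by
      funext t'; exact pS_eq hf s t'
    rw [pT, this]
    exact hc2.deriv
  rw [e1, e2, hsym]

/-- The time derivative of a boundary-constant slice vanishes. -/
lemma pT_boundary {f : ℝ → ℝ → E} (hf : ContDiff ℝ (⊤ : ℕ∞) (Function.uncurry f))
    {x τ : ℝ} (hτ : 0 ≤ τ) (h0 : ∀ y ∈ Ici (0:ℝ), f x y = 0) : pT f x τ = 0 := by
  have h1 : HasDerivWithinAt (fun t' => f x t') (pT f x τ) (Ici 0) τ :=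
    (hasDerivAt_pT hf x τ).hasDerivWithinAt
  have h2 : HasDerivWithinAt (fun t' => f x t') 0 (Ici 0) τ :=
    (hasDerivWithinAt_const τ _ (0 : E)).congr h0 (h0 τ hτ)
  have e1 := h1.derivWithin (uniqueDiffOn_Ici 0 τ hτ)
  have e2 := h2.derivWithin (uniqueDiffOn_Ici 0 τ hτ)
  rw [← e1, e2]
end calc_lemmas

lemma norm3_sq (a : Fin 3 → ℝ) : norm3 a ^ 2 = dot3 a a := by
  have h : 0 ≤ dot3 a a := by
    have : dot3 a a = a 0 ^ 2 + a 1 ^ 2 + a 2 ^ 2 := by unfold dot3; ring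
    rw [this]; positivity
  rw [norm3, Real.sq_sqrt h]

lemma dot3_comm (a b : Fin 3 → ℝ) : dot3 a b = dot3 b a := by unfold dot3; ring

lemma key_alg (a b v : Fin 3 → ℝ) (r : ℝ) :
    dot3 b (cross3 a b + cross3 a (-(r • v)) + cross3 v b)
      + r * dot3 a (cross3 a b + cross3 a (-(r • v)) + cross3 v b) = 0 := by
  simp only [dot3, cross3, Pi.add_apply, Pi.neg_apply, Pi.smul_apply, smul_eq_mul,
    Matrix.cons_val_zero, Matrix.cons_val_one, Matrix.head_cons, Matrix.cons_val_two,
    Matrix.tail_cons]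
  ring

lemma HasDerivAt.dot3' {a b : ℝ → Fin 3 → ℝ} {a' b' : Fin 3 → ℝ} {x : ℝ}
    (ha : HasDerivAt a a' x) (hb : HasDerivAt b b' x) :
    HasDerivAt (fun y => dot3 (a y) (b y)) (dot3 a' (b x) + dot3 (a x) b') x := by
  have hai := fun i => hasDerivAt_pi.mp ha i
  have hbi := fun i => hasDerivAt_pi.mp hb i
  have h := (((hai 0).fun_mul (hbi 0)).fun_add ((hai 1).fun_mul (hbi 1))).fun_add ((hai 2).fun_mul (hbi 2))
  refine h.congr_deriv ?_
  simp only [dot3]; ring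

lemma Continuous.dot3' {X : Type*} [TopologicalSpace X] {a b : X → Fin 3 → ℝ}
    (ha : Continuous a) (hb : Continuous b) : Continuous (fun x => dot3 (a x) (b x)) := by
  simp only [dot3]
  exact ((((continuous_apply 0).comp ha).mul ((continuous_apply 0).comp hb)).add
    (((continuous_apply 1).comp ha).mul ((continuous_apply 1).comp hb))).add
    (((continuous_apply 2).comp ha).mul ((continuous_apply 2).comp hb))

lemma vR_second_deriv {R : ℝ} (vR : ℝ → Fin 3 → ℝ)
    (hvR : ∀ s, vR s = ![Real.cos (s / R), -Real.sin (s / R), 0]) (s : ℝ) :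
    deriv (deriv vR) s = -((1 / R ^ 2) • vR s) := by
  have hv : vR = fun s => ![Real.cos (s / R), -Real.sin (s / R), 0] := funext hvR
  have h1 : ∀ x : ℝ, HasDerivAt vR
      ![-Real.sin (x / R) * (1 / R), -(Real.cos (x / R) * (1 / R)), 0] x := by
    intro x
    rw [hv]
    apply hasDerivAt_pi.mpr
    intro i
    fin_cases i
    · simpa using ((hasDerivAt_id x).div_const R).cos
    · simpa using (((hasDerivAt_id x).div_const R).sin).fun_neg
    · simpa using hasDerivAt_const x (0:ℝ)
  have hd1 : deriv vR = fun x => ![-Real.sin (x / R) * (1 / R), -(Real.cos (x / R) * (1 / R)), 0] :=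
    funext fun x => (h1 x).deriv
  have h2 : HasDerivAt (deriv vR)
      ![-(Real.cos (s / R) * (1 / R) * (1 / R)), Real.sin (s / R) * (1 / R) * (1 / R), 0] s := by
    rw [hd1]
    apply hasDerivAt_pi.mpr
    intro i
    fin_cases i
    · simpa using (((hasDerivAt_id s).div_const R).sin.mul_const (1 / R)).fun_neg
    · simpa using (((hasDerivAt_id s).div_const R).cos.mul_const (1 / R)).fun_neg
    · simpa using hasDerivAt_const s (0:ℝ)
  rw [h2.deriv, hvR s]
  funext i
  fin_cases i <;> simp <;> ring

/-- The energy density. -/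
def gfun (R : ℝ) (φ : ℝ → ℝ → Fin 3 → ℝ) (s τ : ℝ) : ℝ :=
  dot3 (pS φ s τ) (pS φ s τ) - 1 / R ^ 2 * dot3 (φ s τ) (φ s τ)

/-- The time derivative of the energy density. -/
def hfun (R : ℝ) (φ : ℝ → ℝ → Fin 3 → ℝ) (s τ : ℝ) : ℝ :=
  2 * dot3 (pS φ s τ) (pT (pS φ) s τ) - 1 / R ^ 2 * (2 * dot3 (φ s τ) (pT φ s τ))

/-- the quantity `E(φ(t)) = ‖φₛ(t)‖² − (1/R²)‖φ(t)‖²` is conserved for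
solutions of the perturbation equation around the arc-shaped stationary solution. -/
theorem perturbation_energy_conserved
    (L R : ℝ) (hL : 0 < L) (hR : 0 < R)
    (vR : ℝ → Fin 3 → ℝ)
    (hvR : ∀ s, vR s = ![Real.cos (s / R), -Real.sin (s / R), 0])
    (φ : ℝ → ℝ → Fin 3 → ℝ)
    (hφsm : ContDiff ℝ (⊤ : ℕ∞) (Function.uncurry φ))
    (hpert : ∀ s ∈ Set.Icc (0:ℝ) L, ∀ t ∈ Set.Ici (0:ℝ),
      pT φ s t = cross3 (φ s t) (pS (pS φ) s t)
        + cross3 (φ s t) (deriv (deriv vR) s)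
        + cross3 (vR s) (pS (pS φ) s t))
    (hbc : ∀ t ∈ Set.Ici (0:ℝ), φ 0 t = 0 ∧ φ L t = 0) :
    ∀ t ∈ Set.Ici (0:ℝ),
      (∫ s in (0:ℝ)..L, norm3 (pS φ s t) ^ 2)
          - (1/R^2) * ∫ s in (0:ℝ)..L, norm3 (φ s t) ^ 2
        = (∫ s in (0:ℝ)..L, norm3 (pS φ s 0) ^ 2)
          - (1/R^2) * ∫ s in (0:ℝ)..L, norm3 (φ s 0) ^ 2 := by
  intro t ht
  have ht' : (0:ℝ) ≤ t := ht
  -- smoothness of the various partial derivatives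
  have hA : ContDiff ℝ (⊤ : ℕ∞) (Function.uncurry (pS φ)) := contDiff_pS hφsm
  have hB : ContDiff ℝ (⊤ : ℕ∞) (Function.uncurry (pS (pS φ))) := contDiff_pS hA
  have hT : ContDiff ℝ (⊤ : ℕ∞) (Function.uncurry (pT φ)) := contDiff_pT hφsm
  have hTS : ContDiff ℝ (⊤ : ℕ∞) (Function.uncurry (pT (pS φ))) := contDiff_pT hA
  -- continuity of the uncurried densities
  have hgC : Continuous (Function.uncurry (gfun R φ)) := by
    apply Continuous.sub
    · exact hA.continuous.dot3' hA.continuous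
    · exact continuous_const.mul (hφsm.continuous.dot3' hφsm.continuous)
  have hhC : Continuous (Function.uncurry (hfun R φ)) := by
    apply Continuous.sub
    · exact continuous_const.mul (hA.continuous.dot3' hTS.continuous)
    · exact continuous_const.mul
        (continuous_const.mul (hφsm.continuous.dot3' hT.continuous))
  have hgCs : ∀ τ, Continuous (fun s => gfun R φ s τ) := fun τ =>
    hgC.comp (continuous_id.prodMk continuous_const)
  have hhCs : ∀ τ, Continuous (fun s => hfun R φ s τ) := fun τ =>
    hhC.comp (continuous_id.prodMk continuous_const)
  have hhCt : ∀ s, Continuous (fun τ => hfun R φ s τ) := fun s =>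
    hhC.comp (continuous_const.prodMk continuous_id)
  -- time derivative of the density
  have hder : ∀ s τ, HasDerivAt (fun τ' => gfun R φ s τ') (hfun R φ s τ) τ := by
    intro s τ
    have d1 := (hasDerivAt_pT hA s τ).dot3' (hasDerivAt_pT hA s τ)
    have d2 := (hasDerivAt_pT hφsm s τ).dot3' (hasDerivAt_pT hφsm s τ)
    have h := d1.sub (d2.const_mul (1 / R ^ 2))
    refine h.congr_deriv ?_
    rw [hfun, dot3_comm (pT (pS φ) s τ) (pS φ s τ), dot3_comm (pT φ s τ) (φ s τ)]
    ring
  -- FTC in time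
  have claim2 : ∀ s, gfun R φ s t - gfun R φ s 0 = ∫ τ in (0:ℝ)..t, hfun R φ s τ := by
    intro s
    exact (intervalIntegral.integral_eq_sub_of_hasDerivAt (fun τ _ => hder s τ)
      ((hhCt s).intervalIntegrable 0 t)).symm
  -- the space integral of `hfun` vanishes for every nonnegative time
  have claim5 : ∀ τ : ℝ, 0 ≤ τ → (∫ s in (0:ℝ)..L, hfun R φ s τ) = 0 := by
    intro τ hτ
    set k : ℝ → ℝ := fun s => 2 * dot3 (pS φ s τ) (pT φ s τ) with hk_def
    set k' : ℝ → ℝ := fun s =>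
      2 * (dot3 (pS (pS φ) s τ) (pT φ s τ) + dot3 (pS φ s τ) (pT (pS φ) s τ)) with hk'_def
    have hk : ∀ s, HasDerivAt k (k' s) s := by
      intro s
      have h := ((hasDerivAt_pS hA s τ).dot3' (hasDerivAt_pS hT s τ)).const_mul 2
      rw [pS_pT_symm hφsm s τ] at h
      exact h
    have hk'C : Continuous k' :=
      continuous_const.mul
        (((hB.continuous.comp (continuous_id.prodMk continuous_const)).dot3'
            (hT.continuous.comp (continuous_id.prodMk continuous_const))).add
          ((hA.continuous.comp (continuous_id.prodMk continuous_const)).dot3'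
            (hTS.continuous.comp (continuous_id.prodMk continuous_const))))
    have heq : EqOn (fun s => hfun R φ s τ) k' (uIcc (0:ℝ) L) := by
      intro s hs
      rw [uIcc_of_le hL.le] at hs
      have hT0 : pT φ s τ = cross3 (φ s τ) (pS (pS φ) s τ)
          + cross3 (φ s τ) (-((1 / R ^ 2) • vR s))
          + cross3 (vR s) (pS (pS φ) s τ) := by
        rw [hpert s hs τ hτ, vR_second_deriv vR hvR s]
      have hkey := key_alg (φ s τ) (pS (pS φ) s τ) (vR s) (1 / R ^ 2)
      rw [← hT0] at hkey
      simp only [hfun, hk'_def]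
      nlinarith [hkey]
    have hbd0 : pT φ 0 τ = 0 :=
      pT_boundary hφsm hτ (fun y hy => (hbc y hy).1)
    have hbdL : pT φ L τ = 0 :=
      pT_boundary hφsm hτ (fun y hy => (hbc y hy).2)
    rw [intervalIntegral.integral_congr heq,
      intervalIntegral.integral_eq_sub_of_hasDerivAt (fun s _ => hk s)
        (hk'C.intervalIntegrable 0 L)]
    simp only [hk_def, hbd0, hbdL]
    simp [dot3]
  -- Fubini
  have fubini : (∫ s in (0:ℝ)..L, ∫ τ in (0:ℝ)..t, hfun R φ s τ)
      = ∫ τ in (0:ℝ)..t, ∫ s in (0:ℝ)..L, hfun R φ s τ := by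
    rw [intervalIntegral.integral_of_le hL.le, intervalIntegral.integral_of_le ht']
    simp_rw [intervalIntegral.integral_of_le ht', intervalIntegral.integral_of_le hL.le]
    apply MeasureTheory.integral_integral_swap
    rw [Measure.prod_restrict, ← Measure.volume_eq_prod]
    have hint : IntegrableOn (Function.uncurry (hfun R φ))
        ((Icc (0:ℝ) L) ×ˢ (Icc (0:ℝ) t)) volume :=
      hhC.continuousOn.integrableOn_compact (isCompact_Icc.prod isCompact_Icc)
    exact hint.mono_set (Set.prod_mono Ioc_subset_Icc_self Ioc_subset_Icc_self)
  -- conclude that the g-integral is conserved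
  have key : (∫ s in (0:ℝ)..L, gfun R φ s t) = ∫ s in (0:ℝ)..L, gfun R φ s 0 := by
    have hzero : (∫ s in (0:ℝ)..L, (gfun R φ s t - gfun R φ s 0)) = 0 := by
      calc (∫ s in (0:ℝ)..L, (gfun R φ s t - gfun R φ s 0))
          = ∫ s in (0:ℝ)..L, ∫ τ in (0:ℝ)..t, hfun R φ s τ :=
            intervalIntegral.integral_congr (fun s _ => claim2 s)
        _ = ∫ τ in (0:ℝ)..t, ∫ s in (0:ℝ)..L, hfun R φ s τ := fubini
        _ = 0 := by
            rw [intervalIntegral.integral_of_le ht']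
            apply MeasureTheory.setIntegral_congr_fun measurableSet_Ioc
              (g := fun _ : ℝ => (0:ℝ)) ?_ |>.trans (by simp)
            intro τ hτ
            exact claim5 τ hτ.1.le
    have ig1 : IntervalIntegrable (fun s => gfun R φ s t) volume 0 L :=
      (hgCs t).intervalIntegrable 0 L
    have ig2 : IntervalIntegrable (fun s => gfun R φ s 0) volume 0 L :=
      (hgCs 0).intervalIntegrable 0 L
    have hsub := intervalIntegral.integral_sub ig1 ig2
    rw [hsub] at hzero
    linarith
  -- split the g-integral into the two pieces appearing in the statement
  have hsplit : ∀ τ : ℝ, (∫ s in (0:ℝ)..L, gfun R φ s τ)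
      = (∫ s in (0:ℝ)..L, norm3 (pS φ s τ) ^ 2)
        - (1/R^2) * ∫ s in (0:ℝ)..L, norm3 (φ s τ) ^ 2 := by
    intro τ
    have i1 : IntervalIntegrable (fun s => dot3 (pS φ s τ) (pS φ s τ)) volume 0 L :=
      ((hA.continuous.comp (continuous_id.prodMk continuous_const)).dot3'
        (hA.continuous.comp (continuous_id.prodMk continuous_const))).intervalIntegrable 0 L
    have i2 : IntervalIntegrable (fun s => 1 / R ^ 2 * dot3 (φ s τ) (φ s τ)) volume 0 L :=
      (continuous_const.mul
        ((hφsm.continuous.comp (continuous_id.prodMk continuous_const)).dot3'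
          (hφsm.continuous.comp (continuous_id.prodMk continuous_const)))).intervalIntegrable 0 L
    simp only [norm3_sq]
    rw [show (fun s => gfun R φ s τ)
        = fun s => dot3 (pS φ s τ) (pS φ s τ) - 1 / R ^ 2 * dot3 (φ s τ) (φ s τ) from rfl]
    rw [intervalIntegral.integral_sub i1 i2, intervalIntegral.integral_const_mul]
  rw [← hsplit t, ← hsplit 0, key]
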